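/- If λ is a limit ordinal, then for every ordinal α one has ⨁_{i<λ} α = α·λ, where ⨁_{i<λ} α is the λ-fold iterated Hessenberg sum of α and · is ordinal multiplication. -/

import Mathlib

namespace Ordinal

universe u

/-- Natural (Hessenberg) addition of ordinals, as defined in Mathlib (Dec 2024),
which no longer provides it. -/
noncomputable def nadd (a b : Ordinal.{u}) : Ordinal.{u} :=
  max (⨆ x : Set.Iio a, Order.succ (nadd x.1 b)) (⨆ x : Set.Iio b, Order.succ (nadd a x.1))
termination_by (a, b)
decreasing_by
  · exact Prod.Lex.left _ _ x.2
  · exact Prod.Lex.right _ x.2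

end Ordinal

/-- The `β`-fold iterated Hessenberg (natural) sum of `α`:
`⨁_{i<0} α = 0`, `⨁_{i<β+1} α = (⨁_{i<β} α) ⊕ α`, and
`⨁_{i<λ} α = sup_{β<λ} ⨁_{i<β} α` for `λ` a limit ordinal. -/
noncomputable def iterNadd (α β : Ordinal) : Ordinal :=
  Ordinal.limitRecOn β 0 (fun _ ih => Ordinal.nadd ih α)
    (fun b _ ih => ⨆ γ : Set.Iio b, ih γ.1 γ.2)

/-!
Every power `ω ^ c` is closed under `♯`: by induction on `c`, the successor step resting on
`ω ^ d * m ♯ ω ^ d * n = ω ^ d * (m + n)` for natural `m`, `n`. Hence `♯` agrees with `+` on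
`ω ^ c * u ♯ y` for `y < ω ^ c`, and `x ♯ y < ω ^ c * u` whenever `x < ω ^ c * u`.
For `α ≠ 0` and a limit `λ = ω * ν` one has `α * λ = ω ^ c * ν` with `c = log_ω α + 1`, and
`α < ω ^ c`; so `x ↦ x ♯ α` maps `Iio (α * λ)` into itself, and transfinite induction puts every
`⨁_{i<β} α` with `β < λ` below `α * λ`. The reverse inequality comes from `α * β ≤ ⨁_{i<β} α`,
since `a + b ≤ a ♯ b`.
-/

open Order

local infixl:65 " ♯ " => Ordinal.nadd

namespace Ordinal

section nadd

variable {a b c d : Ordinal}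

theorem nadd_le_iff : b ♯ c ≤ a ↔ (∀ b' < b, b' ♯ c < a) ∧ ∀ c' < c, b ♯ c' < a := by
  rw [nadd.eq_1 b c, max_le_iff, Ordinal.iSup_le_iff, Ordinal.iSup_le_iff]
  simp only [succ_le_iff, Subtype.forall, Set.mem_Iio]

theorem lt_nadd_iff : a < b ♯ c ↔ (∃ b' < b, a ≤ b' ♯ c) ∨ ∃ c' < c, a ≤ b ♯ c' := by
  rw [← not_le, nadd_le_iff]
  simp only [not_and_or, not_forall, not_lt, exists_prop]

theorem nadd_lt_nadd_right (h : b < c) (a : Ordinal) : b ♯ a < c ♯ a :=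
  lt_nadd_iff.2 (Or.inl ⟨b, h, le_rfl⟩)

theorem nadd_lt_nadd_left (h : b < c) (a : Ordinal) : a ♯ b < a ♯ c :=
  lt_nadd_iff.2 (Or.inr ⟨b, h, le_rfl⟩)

theorem nadd_le_nadd_right (h : b ≤ c) (a : Ordinal) : b ♯ a ≤ c ♯ a := by
  rcases h.lt_or_eq with h | rfl
  exacts [(nadd_lt_nadd_right h a).le, le_rfl]

theorem nadd_le_nadd_left (h : b ≤ c) (a : Ordinal) : a ♯ b ≤ a ♯ c := by
  rcases h.lt_or_eq with h | rfl
  exacts [(nadd_lt_nadd_left h a).le, le_rfl]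

theorem nadd_le_nadd (hab : a ≤ b) (hcd : c ≤ d) : a ♯ c ≤ b ♯ d :=
  (nadd_le_nadd_right hab c).trans (nadd_le_nadd_left hcd b)

@[simp]
theorem nadd_zero (a : Ordinal) : a ♯ 0 = a := by
  induction a using WellFoundedLT.induction with
  | _ a IH =>
    refine le_antisymm (nadd_le_iff.2 ⟨fun a' ha' => ?_, fun c' hc' => (not_lt_zero hc').elim⟩)
      (le_of_forall_lt fun a' ha' => lt_nadd_iff.2 (Or.inl ⟨a', ha', (IH a' ha').ge⟩))
    rwa [IH a' ha']

theorem nadd_comm (a b : Ordinal) : a ♯ b = b ♯ a := by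
  induction a using WellFoundedLT.induction generalizing b with
  | _ a IHa =>
    induction b using WellFoundedLT.induction with
    | _ b IHb =>
      apply le_antisymm <;> refine nadd_le_iff.2 ⟨fun x hx => ?_, fun x hx => ?_⟩
      · rw [IHa x hx]; exact nadd_lt_nadd_left hx b
      · rw [IHb x hx]; exact nadd_lt_nadd_right hx a
      · rw [← IHb x hx]; exact nadd_lt_nadd_left hx a
      · rw [← IHa x hx]; exact nadd_lt_nadd_right hx b

@[simp]
theorem zero_nadd (a : Ordinal) : 0 ♯ a = a := by
  rw [nadd_comm, nadd_zero]

theorem nadd_assoc (a b c : Ordinal) : a ♯ b ♯ c = a ♯ (b ♯ c) := by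
  induction a using WellFoundedLT.induction generalizing b c with
  | _ a IHa =>
  induction b using WellFoundedLT.induction generalizing c with
  | _ b IHb =>
  induction c using WellFoundedLT.induction with
  | _ c IHc =>
  apply le_antisymm
  · refine nadd_le_iff.2 ⟨fun d hd => ?_, fun c' hc' => ?_⟩
    · rcases lt_nadd_iff.1 hd with ⟨a', ha', hd'⟩ | ⟨b', hb', hd'⟩
      · calc d ♯ c ≤ a' ♯ b ♯ c := nadd_le_nadd_right hd' c
          _ = a' ♯ (b ♯ c) := IHa a' ha' b c
          _ < a ♯ (b ♯ c) := nadd_lt_nadd_right ha' _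
      · calc d ♯ c ≤ a ♯ b' ♯ c := nadd_le_nadd_right hd' c
          _ = a ♯ (b' ♯ c) := IHb b' hb' c
          _ < a ♯ (b ♯ c) := nadd_lt_nadd_left (nadd_lt_nadd_right hb' c) a
    · rw [IHc c' hc']; exact nadd_lt_nadd_left (nadd_lt_nadd_left hc' b) a
  · refine nadd_le_iff.2 ⟨fun a' ha' => ?_, fun e he => ?_⟩
    · rw [← IHa a' ha']; exact nadd_lt_nadd_right (nadd_lt_nadd_right ha' b) c
    · rcases lt_nadd_iff.1 he with ⟨b', hb', he'⟩ | ⟨c', hc', he'⟩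
      · calc a ♯ e ≤ a ♯ (b' ♯ c) := nadd_le_nadd_left he' a
          _ = a ♯ b' ♯ c := (IHb b' hb' c).symm
          _ < a ♯ b ♯ c := nadd_lt_nadd_right (nadd_lt_nadd_left hb' a) c
      · calc a ♯ e ≤ a ♯ (b ♯ c') := nadd_le_nadd_left he' a
          _ = a ♯ b ♯ c' := (IHc c' hc').symm
          _ < a ♯ b ♯ c := nadd_lt_nadd_left hc' _

theorem nadd_right_comm (a b c : Ordinal) : a ♯ b ♯ c = a ♯ c ♯ b := by
  rw [nadd_assoc, nadd_comm b, ← nadd_assoc]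

theorem add_le_nadd (a b : Ordinal) : a + b ≤ a ♯ b := by
  induction b using WellFoundedLT.induction with
  | _ b IH =>
    refine le_of_forall_lt fun x hx => ?_
    rcases lt_or_ge x a with h | h
    · exact h.trans_le ((nadd_zero a).ge.trans (nadd_le_nadd_left zero_le a))
    · obtain ⟨d, hd, rfl⟩ := exists_add_of_le h
      have hdb : d < b := by simpa using hx
      exact (IH d hdb).trans_lt (nadd_lt_nadd_left hdb a)

end nadd

section opow

variable {c u x y : Ordinal}

theorem nadd_lt_opow_mul_of_forall (hc : IsPrincipal nadd (ω ^ c))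
    (hu : ∀ v < u, ∀ w < ω ^ c, ω ^ c * v ♯ w = ω ^ c * v + w)
    (hx : x < ω ^ c * u) (hy : y < ω ^ c) : x ♯ y < ω ^ c * u := by
  obtain ⟨v, hv, w, hw, rfl⟩ := lt_mul_iff.1 hx
  have hwy : w ♯ y < ω ^ c := hc hw hy
  calc (ω ^ c * v + w) ♯ y = ω ^ c * v ♯ (w ♯ y) := by rw [← hu v hv w hw, nadd_assoc]
    _ = ω ^ c * v + (w ♯ y) := hu v hv _ hwy
    _ < ω ^ c * (v + 1) := by rw [mul_add_one]; gcongr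
    _ ≤ ω ^ c * u := by gcongr; exact add_one_le_iff.2 hv

theorem opow_mul_nadd_of_lt (hc : IsPrincipal nadd (ω ^ c)) (u : Ordinal) (hy : y < ω ^ c) :
    ω ^ c * u ♯ y = ω ^ c * u + y := by
  induction u using WellFoundedLT.induction generalizing y with
  | _ u IHu =>
  induction y using WellFoundedLT.induction with
  | _ y IHy =>
  refine le_antisymm (nadd_le_iff.2 ⟨fun x hx => ?_, fun y' hy' => ?_⟩) (add_le_nadd _ _)
  · exact (nadd_lt_opow_mul_of_forall hc (fun v hv w hw => IHu v hv hw) hx hy).trans_le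
      le_self_add
  · rw [IHy y' hy' (hy'.trans hy)]
    gcongr

theorem nadd_lt_opow_mul (hc : IsPrincipal nadd (ω ^ c)) (hx : x < ω ^ c * u) (hy : y < ω ^ c) :
    x ♯ y < ω ^ c * u :=
  nadd_lt_opow_mul_of_forall hc (fun v _ _ => opow_mul_nadd_of_lt hc v) hx hy

theorem opow_mul_nadd_opow (hc : IsPrincipal nadd (ω ^ c)) (u : Ordinal) :
    ω ^ c * u ♯ ω ^ c = ω ^ c * (u + 1) := by
  induction u using WellFoundedLT.induction with
  | _ u IH =>
  refine le_antisymm (nadd_le_iff.2 ⟨fun x hx => ?_, fun z hz => ?_⟩) ?_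
  · obtain ⟨v, hv, w, hw, rfl⟩ := lt_mul_iff.1 hx
    rw [← opow_mul_nadd_of_lt hc v hw, nadd_right_comm, IH v hv]
    refine nadd_lt_opow_mul hc ?_ hw
    gcongr
    · exact opow_pos c omega0_pos
    · simpa using hv
  · rw [opow_mul_nadd_of_lt hc u hz, mul_add_one]
    gcongr
  · rw [mul_add_one]
    exact add_le_nadd _ _

theorem opow_mul_nadd_opow_mul_natCast (hc : IsPrincipal nadd (ω ^ c)) (u : Ordinal) (n : ℕ) :
    ω ^ c * u ♯ ω ^ c * n = ω ^ c * (u + n) := by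
  induction n with
  | zero => simp
  | succ n ih =>
    rw [Nat.cast_succ, ← opow_mul_nadd_opow hc n, ← nadd_assoc, ih, opow_mul_nadd_opow hc,
      add_assoc]

theorem isPrincipal_nadd_omega0_opow (c : Ordinal) : IsPrincipal nadd (ω ^ c) := by
  induction c using Ordinal.limitRecOn with
  | zero => simp
  | add_one d hd =>
    intro a b ha hb
    rw [← succ_eq_add_one, lt_omega0_opow_succ] at ha hb
    obtain ⟨m, ha⟩ := ha
    obtain ⟨n, hb⟩ := hb
    calc a ♯ b ≤ ω ^ d * m ♯ ω ^ d * n := nadd_le_nadd ha.le hb.le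
      _ = ω ^ d * (m + n : ℕ) := by rw [opow_mul_nadd_opow_mul_natCast hd, Nat.cast_add]
      _ < ω ^ (d + 1) := opow_mul_lt_opow (natCast_lt_omega0 _) (lt_add_one d)
  | limit c hc IH =>
    intro a b ha hb
    obtain ⟨d₁, hd₁, ha⟩ := (lt_opow_of_isSuccLimit omega0_ne_zero hc).1 ha
    obtain ⟨d₂, hd₂, hb⟩ := (lt_opow_of_isSuccLimit omega0_ne_zero hc).1 hb
    have hd : max d₁ d₂ < c := max_lt hd₁ hd₂
    refine (IH _ hd ?_ ?_).trans ((opow_lt_opow_iff_right one_lt_omega0).2 hd)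
    · exact ha.trans_le (opow_le_opow_right omega0_pos (le_max_left _ _))
    · exact hb.trans_le (opow_le_opow_right omega0_pos (le_max_right _ _))

end opow

theorem nadd_lt_mul_of_omega0_dvd {α μ x : Ordinal} (hμ : ω ∣ μ) (hx : x < α * μ) :
    x ♯ α < α * μ := by
  obtain rfl | hα := eq_or_ne α 0
  · simp at hx
  obtain ⟨ν, rfl⟩ := hμ
  rw [← mul_assoc, mul_eq_opow_log_succ hα isPrincipal_mul_omega0 (natCast_lt_omega0 2)] at hx ⊢
  exact nadd_lt_opow_mul (isPrincipal_nadd_omega0_opow _) hx (lt_opow_succ_log_self one_lt_omega0 α)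

end Ordinal

open Ordinal

theorem iterNadd_zero (α : Ordinal) : iterNadd α 0 = 0 :=
  limitRecOn_zero _ _ _

theorem iterNadd_add_one (α β : Ordinal) : iterNadd α (β + 1) = iterNadd α β ♯ α :=
  limitRecOn_add_one _ _ _ _

theorem iterNadd_limit (α : Ordinal) {l : Ordinal} (hl : IsSuccLimit l) :
    iterNadd α l = ⨆ β : Set.Iio l, iterNadd α β :=
  limitRecOn_limit _ _ _ _ hl

theorem iterNadd_zero_left (β : Ordinal) : iterNadd 0 β = 0 := by
  induction β using Ordinal.limitRecOn with
  | zero => exact iterNadd_zero 0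
  | add_one β ih => rw [iterNadd_add_one, ih, nadd_zero]
  | limit β hβ ih =>
    rw [iterNadd_limit 0 hβ, ← nonpos_iff_eq_zero]
    exact Ordinal.iSup_le fun γ => (ih γ.1 γ.2).le

theorem mul_le_iterNadd (α β : Ordinal) : α * β ≤ iterNadd α β := by
  induction β using Ordinal.limitRecOn with
  | zero => simp [iterNadd_zero]
  | add_one β ih =>
    rw [iterNadd_add_one, mul_add_one]
    exact (add_le_add_left ih α).trans (add_le_nadd _ _)
  | limit β hβ ih =>
    rw [iterNadd_limit α hβ, mul_le_iff_of_isSuccLimit hβ]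
    exact fun γ hγ => (ih γ hγ).trans (Ordinal.le_iSup (fun δ : Set.Iio β => iterNadd α δ) ⟨γ, hγ⟩)

theorem iterNadd_lt_mul {α β μ : Ordinal} (hα : α ≠ 0) (hμ : IsSuccLimit μ) (hβ : β < μ) :
    iterNadd α β < α * μ := by
  induction β using Ordinal.limitRecOn generalizing μ with
  | zero => rw [iterNadd_zero]; exact mul_pos (pos_iff_ne_zero.2 hα) hμ.bot_lt
  | add_one β ih =>
    rw [iterNadd_add_one]
    exact nadd_lt_mul_of_omega0_dvd (isSuccPrelimit_iff_omega0_dvd.1 hμ.isSuccPrelimit)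
      (ih hμ ((lt_add_one β).trans hβ))
  | limit β hβ' ih =>
    calc iterNadd α β ≤ α * β := by
          rw [iterNadd_limit α hβ']
          exact Ordinal.iSup_le fun γ => (ih γ.1 γ.2 hβ' γ.2).le
      _ < α * μ := by gcongr

/-- If `λ` is a limit ordinal, then `⨁_{i<λ} α = α·λ` for every ordinal `α`. -/
theorem iterNadd_of_isLimit (α l : Ordinal) (hl : Order.IsSuccLimit l) :
    iterNadd α l = α * l := by
  obtain rfl | hα := eq_or_ne α 0
  · rw [iterNadd_zero_left, zero_mul]
  refine le_antisymm ?_ (mul_le_iterNadd α l)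
  rw [iterNadd_limit α hl]
  exact Ordinal.iSup_le fun β => (iterNadd_lt_mul hα hl β.2).le
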